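/- arXiv:2510.22022 — 3 statements merged into one kernel-verified Lean document; each statement's English description precedes it below -/
import Mathlib

section
/- Let α > 0 and r > 0 with r ≠ 1, and define L(T) = (1/(r−1))·((e^{αrT}−1)/(e^{αT}−1) − r) for T > 0. Then lim_{T→0⁺} L(T) = 0, and if r < 1/2 then L(T) < 1 for all T > 0. -/
open Real Filter

/-- For `α > 0`, `r > 0`, `r ≠ 1`, the Lipschitz constant
`L(T) = (1/(r-1))·((e^{αrT}-1)/(e^{αT}-1) - r)` satisfies `lim_{T→0⁺} L(T) = 0`,
and if `r < 1/2` then `L(T) < 1` for all `T > 0`. -/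
theorem stmt1 (α r : ℝ) (hα : 0 < α) (hr : 0 < r) (hr1 : r ≠ 1)
    (L : ℝ → ℝ)
    (hL : ∀ T, L T = (1 / (r - 1)) * ((Real.exp (α * r * T) - 1) / (Real.exp (α * T) - 1) - r)) :
    Tendsto L (nhdsWithin 0 (Set.Ioi 0)) (nhds 0) ∧
    (r < 1 / 2 → ∀ T > 0, L T < 1) := by
  constructor
  · -- limit part
    have hd1 : HasDerivAt (fun T : ℝ => Real.exp (α * r * T)) (α * r) 0 := by
      have h := ((hasDerivAt_id (0:ℝ)).const_mul (α * r)).exp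
      simpa using h
    have hd2 : HasDerivAt (fun T : ℝ => Real.exp (α * T)) α 0 := by
      have h := ((hasDerivAt_id (0:ℝ)).const_mul α).exp
      simpa using h
    have hs1 : Tendsto (fun T : ℝ => (Real.exp (α * r * T) - 1) / T)
        (nhdsWithin 0 (Set.Ioi 0)) (nhds (α * r)) := by
      have := (hasDerivAt_iff_tendsto_slope.mp hd1).mono_left
        (nhdsWithin_mono 0 (fun x hx => by
          simpa using (ne_of_gt (Set.mem_Ioi.mp hx))))
      refine this.congr (fun T => ?_)
      simp [slope_def_field, div_eq_inv_mul]
    have hs2 : Tendsto (fun T : ℝ => (Real.exp (α * T) - 1) / T)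
        (nhdsWithin 0 (Set.Ioi 0)) (nhds α) := by
      have := (hasDerivAt_iff_tendsto_slope.mp hd2).mono_left
        (nhdsWithin_mono 0 (fun x hx => by
          simpa using (ne_of_gt (Set.mem_Ioi.mp hx))))
      refine this.congr (fun T => ?_)
      simp [slope_def_field, div_eq_inv_mul]
    have hratio : Tendsto (fun T : ℝ => (Real.exp (α * r * T) - 1) / (Real.exp (α * T) - 1))
        (nhdsWithin 0 (Set.Ioi 0)) (nhds r) := by
      have h := hs1.div hs2 (ne_of_gt hα)
      have heq : ∀ T ∈ Set.Ioi (0:ℝ),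
          ((Real.exp (α * r * T) - 1) / T) / ((Real.exp (α * T) - 1) / T)
            = (Real.exp (α * r * T) - 1) / (Real.exp (α * T) - 1) := by
        intro T hT
        have hT0 : T ≠ 0 := ne_of_gt hT
        field_simp
      have : Tendsto (fun T : ℝ => (Real.exp (α * r * T) - 1) / (Real.exp (α * T) - 1))
          (nhdsWithin 0 (Set.Ioi 0)) (nhds (α * r / α)) := by
        refine h.congr' ?_
        filter_upwards [self_mem_nhdsWithin] with T hT
        exact heq T hT
      have hαr : α * r / α = r := by field_simp
      rwa [hαr] at this
    have hfinal : Tendsto (fun T : ℝ =>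
        (1 / (r - 1)) * ((Real.exp (α * r * T) - 1) / (Real.exp (α * T) - 1) - r))
        (nhdsWithin 0 (Set.Ioi 0)) (nhds 0) := by
      have h := (hratio.sub_const r).const_mul (1 / (r - 1))
      simpa using h
    exact hfinal.congr (fun T => (hL T).symm)
  · intro hr2 T hT
    rw [hL T]
    have hE1 : 0 < Real.exp (α * r * T) - 1 := by
      have h : (0:ℝ) < α * r * T := by positivity
      linarith [(Real.one_lt_exp_iff (x := α * r * T)).2 h]
    have hE2 : 0 < Real.exp (α * T) - 1 := by
      have h : (0:ℝ) < α * T := by positivity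
      linarith [(Real.one_lt_exp_iff (x := α * T)).2 h]
    have hratio : 0 < (Real.exp (α * r * T) - 1) / (Real.exp (α * T) - 1) :=
      div_pos hE1 hE2
    have hr1' : r - 1 < 0 := by linarith
    have hc : 1 / (r - 1) < 0 := div_neg_of_pos_of_neg one_pos hr1'
    have hx : r - 1 < (Real.exp (α * r * T) - 1) / (Real.exp (α * T) - 1) - r := by
      linarith
    calc (1 / (r - 1)) * ((Real.exp (α * r * T) - 1) / (Real.exp (α * T) - 1) - r)
        < (1 / (r - 1)) * (r - 1) := mul_lt_mul_of_neg_left hx hc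
      _ = 1 := one_div_mul_cancel (ne_of_lt hr1')
end

section
/- Let 2 ≤ p < ∞ with conjugate q, ω ∈ L^q(ℝᵈ), and g ∈ L^∞(ℝᵈ). Then for all h, v ∈ Lᵖ(ℝᵈ), the function Γ(x) = ∫_{ℝᵈ} ω(x−y) g(y) h(y) v(y) dy belongs to Lᵖ(ℝᵈ) and satisfies ‖Γ‖_p ≤ ‖g‖_∞ ‖ω‖_q ‖h‖_p ‖v‖_p. -/
/-!
Writing `F = g h v`, `Γ` is the convolution `ω ⋆ F`, and `1/q + 2/p = 1 + 1/p`, so Young's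
convolution inequality gives `‖Γ‖_p ≤ ‖ω‖_q ‖F‖_{p/2}`, while Hölder's inequality gives
`‖F‖_{p/2} ≤ ‖g‖_∞ ‖h‖_p ‖v‖_p`.

Young's inequality is proved for the `ℝ≥0∞`-valued convolution `f ⋆ₗ g`, with
`1/Q + 1/R = 1 + 1/P`: for each `x` the three-factor Hölder inequality applied to
`f(y) g(x-y) = (f(y)^Q g(x-y)^R)^(1/P) (f(y)^Q)^(1/Q-1/P) (g(x-y)^R)^(1/R-1/P)` bounds
`(f ⋆ₗ g)(x)^P` by `(f^Q ⋆ₗ g^R)(x) ‖f‖_Q^(P-Q) ‖g‖_R^(P-R)`, and by Tonelli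
`∫ f^Q ⋆ₗ g^R = ‖f‖_Q^Q ‖g‖_R^R`.
-/

open MeasureTheory
open scoped ENNReal

namespace ENNReal

theorem lintegral_mul_mul_rpow_le {α : Type*} [MeasurableSpace α] {μ : Measure α}
    {f g k : α → ℝ≥0∞} (hf : AEMeasurable f μ) (hg : AEMeasurable g μ) (hk : AEMeasurable k μ)
    {a b c : ℝ} (ha : 0 ≤ a) (hb : 0 ≤ b) (hc : 0 ≤ c) (habc : a + b + c = 1) :
    ∫⁻ x, f x ^ a * g x ^ b * k x ^ c ∂μ ≤
      (∫⁻ x, f x ∂μ) ^ a * (∫⁻ x, g x ∂μ) ^ b * (∫⁻ x, k x ∂μ) ^ c := by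
  simpa [Fin.prod_univ_three, mul_assoc] using
    ENNReal.lintegral_prod_norm_pow_le (μ := μ) Finset.univ (f := ![f, g, k]) (p := ![a, b, c])
      (by simp [Fin.forall_fin_succ, hf, hg, hk]) (by simpa [Fin.sum_univ_three] using habc)
      (by simp [Fin.forall_fin_succ, ha, hb, hc])

theorem rpow_mul_rpow_sub (x : ℝ≥0∞) {s t : ℝ} (hs : 0 ≤ s) (hst : s ≤ t) :
    x ^ s * x ^ (t - s) = x ^ t := by
  rw [← ENNReal.rpow_add_of_nonneg _ _ hs (sub_nonneg.2 hst), add_sub_cancel]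

theorem mul_eq_rpow_mul_rpow_mul_rpow {P Q R : ℝ} (a b : ℝ≥0∞) (hP : 0 ≤ P)
    (hQ : Q ≠ 0) (hR : R ≠ 0) (hPQ : P⁻¹ ≤ Q⁻¹) (hPR : P⁻¹ ≤ R⁻¹) :
    a * b = (a ^ Q * b ^ R) ^ P⁻¹ * (a ^ Q) ^ (Q⁻¹ - P⁻¹) * (b ^ R) ^ (R⁻¹ - P⁻¹) := by
  have hP' : 0 ≤ P⁻¹ := inv_nonneg.2 hP
  calc a * b
      = ((a ^ Q) ^ P⁻¹ * (a ^ Q) ^ (Q⁻¹ - P⁻¹)) * ((b ^ R) ^ P⁻¹ * (b ^ R) ^ (R⁻¹ - P⁻¹)) := by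
        rw [rpow_mul_rpow_sub _ hP' hPQ, rpow_mul_rpow_sub _ hP' hPR, rpow_rpow_inv hQ,
          rpow_rpow_inv hR]
    _ = _ := by rw [mul_rpow_of_nonneg _ _ hP']; ring

theorem ne_top_of_inv_add_inv_eq_one_add_inv {a b p : ℝ≥0∞} (hp : p ≠ ∞) (hb : 1 ≤ b)
    (h : a⁻¹ + b⁻¹ = 1 + p⁻¹) : a ≠ ∞ := by
  rintro rfl
  rw [inv_top, zero_add] at h
  have : 1 < b⁻¹ := h ▸ ENNReal.lt_add_right one_ne_top (by simpa using hp)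
  exact (ENNReal.inv_le_one.2 hb).not_gt this

theorem inv_div_two (p : ℝ≥0∞) : (p / 2)⁻¹ = p⁻¹ + p⁻¹ := by
  rw [ENNReal.inv_div (.inl ENNReal.ofNat_ne_top) (.inl two_ne_zero), div_eq_mul_inv, two_mul]

end ENNReal

namespace MeasureTheory

theorem eLpNorm_mul_le_mul_eLpNorm {α 𝕜 : Type*} [MeasurableSpace α] [NormedRing 𝕜] {μ : Measure α}
    {p q r : ℝ≥0∞} [p.HolderTriple q r] {f g : α → 𝕜} (hf : AEStronglyMeasurable f μ)
    (hg : AEStronglyMeasurable g μ) :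
    eLpNorm (fun x => f x * g x) r μ ≤ eLpNorm f p μ * eLpNorm g q μ := by
  simpa using eLpNorm_le_eLpNorm_mul_eLpNorm'_of_norm hf hg (· * ·) 1
    (.of_forall fun _ => by simpa using norm_mul_le _ _)

theorem eLpNorm_mul_mul_le_top_mul_mul_eLpNorm {α 𝕜 : Type*} [MeasurableSpace α] [NormedRing 𝕜]
    {μ : Measure α} {p q r : ℝ≥0∞} [p.HolderTriple q r] {f g k : α → 𝕜}
    (hf : AEStronglyMeasurable f μ) (hg : AEStronglyMeasurable g μ)
    (hk : AEStronglyMeasurable k μ) :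
    eLpNorm (fun x => f x * (g x * k x)) r μ ≤
      eLpNorm f ∞ μ * (eLpNorm g p μ * eLpNorm k q μ) := by
  calc eLpNorm (fun x => f x * (g x * k x)) r μ
      ≤ eLpNorm f ∞ μ * eLpNorm (fun x => g x * k x) r μ :=
        eLpNorm_mul_le_mul_eLpNorm hf (hg.mul hk)
    _ ≤ _ := by grw [eLpNorm_mul_le_mul_eLpNorm (p := p) (q := q) hg hk]

section Convolution

variable {G : Type*} [AddCommGroup G] [MeasurableSpace G] {μ : Measure G}

theorem enorm_integral_sub_mul_le_lconvolution {𝕜 : Type*} [NormedRing 𝕜] [NormMulClass 𝕜]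
    [NormedSpace ℝ 𝕜] (ω F : G → 𝕜) (x : G) :
    ‖∫ y, ω (x - y) * F y ∂μ‖ₑ ≤ ((fun y => ‖F y‖ₑ) ⋆ₗ[μ] fun y => ‖ω y‖ₑ) x := by
  refine (enorm_integral_le_lintegral_enorm _).trans_eq (lintegral_congr fun y => ?_)
  rw [enorm_mul, neg_add_eq_sub, mul_comm]

variable [MeasurableAdd₂ G] [MeasurableNeg G] [SFinite μ] [μ.IsAddLeftInvariant]

theorem AEStronglyMeasurable.integral_sub_mul {𝕜 : Type*} [NormedRing 𝕜]
    [NormedSpace ℝ 𝕜] {ω F : G → 𝕜} (hω : AEStronglyMeasurable ω μ)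
    (hF : AEStronglyMeasurable F μ) :
    AEStronglyMeasurable (fun x => ∫ y, ω (x - y) * F y ∂μ) μ :=
  ((hω.comp_quasiMeasurePreserving (quasiMeasurePreserving_sub_of_right_invariant μ μ)).mul
    hF.comp_snd).integral_prod_right'

variable {f g : G → ℝ≥0∞}

theorem lintegral_lconvolution (hf : AEMeasurable f μ) (hg : AEMeasurable g μ) :
    ∫⁻ x, (f ⋆ₗ[μ] g) x ∂μ = (∫⁻ x, f x ∂μ) * ∫⁻ x, g x ∂μ := by
  simp only [lconvolution_def]
  rw [lintegral_lintegral_swap (by fun_prop), ← lintegral_mul_const'' _ hf]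
  refine lintegral_congr fun y => ?_
  rw [lintegral_const_mul'' _ (by fun_prop), lintegral_add_left_eq_self]

variable [μ.IsNegInvariant]

theorem lconvolution_apply_le {P Q R : ℝ} (hP : 0 < P) (hQ : 1 ≤ Q) (hR : 1 ≤ R)
    (hPQR : Q⁻¹ + R⁻¹ = 1 + P⁻¹) (hf : AEMeasurable f μ) (hg : AEMeasurable g μ) (x : G) :
    (f ⋆ₗ[μ] g) x ≤ ((fun y => f y ^ Q) ⋆ₗ[μ] fun y => g y ^ R) x ^ P⁻¹ *
      (∫⁻ y, f y ^ Q ∂μ) ^ (Q⁻¹ - P⁻¹) * (∫⁻ y, g y ^ R ∂μ) ^ (R⁻¹ - P⁻¹) := by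
  have hPQ : P⁻¹ ≤ Q⁻¹ := by linarith [inv_le_one_of_one_le₀ hR]
  have hPR : P⁻¹ ≤ R⁻¹ := by linarith [inv_le_one_of_one_le₀ hQ]
  have hg_translate : ∫⁻ y, g (-y + x) ^ R ∂μ = ∫⁻ y, g y ^ R ∂μ := by
    simp only [neg_add_eq_sub]
    exact lintegral_sub_left_eq_self (fun y => g y ^ R) x
  calc (f ⋆ₗ[μ] g) x
      = ∫⁻ y, (f y ^ Q * g (-y + x) ^ R) ^ P⁻¹ * (f y ^ Q) ^ (Q⁻¹ - P⁻¹) *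
          (g (-y + x) ^ R) ^ (R⁻¹ - P⁻¹) ∂μ := by
        simp only [lconvolution_def]
        congr 1 with y
        exact ENNReal.mul_eq_rpow_mul_rpow_mul_rpow _ _ hP.le (by positivity) (by positivity)
          hPQ hPR
    _ ≤ _ := by
        rw [← hg_translate]
        exact ENNReal.lintegral_mul_mul_rpow_le (by fun_prop) (by fun_prop) (by fun_prop)
          (by positivity) (sub_nonneg.2 hPQ) (sub_nonneg.2 hPR) (by linarith)

theorem lintegral_lconvolution_rpow_le {P Q R : ℝ} (hP : 0 < P) (hQ : 1 ≤ Q) (hR : 1 ≤ R)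
    (hPQR : Q⁻¹ + R⁻¹ = 1 + P⁻¹) (hf : AEMeasurable f μ) (hg : AEMeasurable g μ) :
    ∫⁻ x, (f ⋆ₗ[μ] g) x ^ P ∂μ ≤ (∫⁻ x, f x ^ Q ∂μ) ^ (P / Q) * (∫⁻ x, g x ^ R ∂μ) ^ (P / R) := by
  set A := ∫⁻ x, f x ^ Q ∂μ
  set B := ∫⁻ x, g x ^ R ∂μ
  have hQP : 1 ≤ P / Q := by
    rw [le_div_iff₀ (by positivity), one_mul, ← inv_le_inv₀ hP (by positivity)]
    linarith [inv_le_one_of_one_le₀ hR]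
  have hRP : 1 ≤ P / R := by
    rw [le_div_iff₀ (by positivity), one_mul, ← inv_le_inv₀ hP (by positivity)]
    linarith [inv_le_one_of_one_le₀ hQ]
  have hpow : (A ^ (Q⁻¹ - P⁻¹) * B ^ (R⁻¹ - P⁻¹)) ^ P = A ^ (P / Q - 1) * B ^ (P / R - 1) := by
    rw [ENNReal.mul_rpow_of_nonneg _ _ hP.le, ← ENNReal.rpow_mul, ← ENNReal.rpow_mul]
    congr 2 <;> field_simp
  calc ∫⁻ x, (f ⋆ₗ[μ] g) x ^ P ∂μ
      ≤ ∫⁻ x, ((fun y => f y ^ Q) ⋆ₗ[μ] fun y => g y ^ R) x *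
          (A ^ (Q⁻¹ - P⁻¹) * B ^ (R⁻¹ - P⁻¹)) ^ P ∂μ := by
        refine lintegral_mono fun x => ?_
        calc (f ⋆ₗ[μ] g) x ^ P
            ≤ (((fun y => f y ^ Q) ⋆ₗ[μ] fun y => g y ^ R) x ^ P⁻¹ *
                (A ^ (Q⁻¹ - P⁻¹) * B ^ (R⁻¹ - P⁻¹))) ^ P := by
              rw [← mul_assoc]
              gcongr
              exact lconvolution_apply_le hP hQ hR hPQR hf hg x
          _ = _ := by
              rw [ENNReal.mul_rpow_of_nonneg _ _ hP.le, ENNReal.rpow_inv_rpow hP.ne']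
    _ = A * B * (A ^ (P / Q - 1) * B ^ (P / R - 1)) := by
        rw [lintegral_mul_const'' _ (aemeasurable_lconvolution (by fun_prop) (by fun_prop)),
          lintegral_lconvolution (by fun_prop) (by fun_prop), hpow]
    _ = A ^ (P / Q) * B ^ (P / R) := by
        rw [← ENNReal.rpow_mul_rpow_sub A zero_le_one hQP,
          ← ENNReal.rpow_mul_rpow_sub B zero_le_one hRP, ENNReal.rpow_one, ENNReal.rpow_one,
          mul_mul_mul_comm]

theorem eLpNorm_lconvolution_le {p q r : ℝ≥0∞} (hp : p ≠ ∞) (hq : 1 ≤ q) (hr : 1 ≤ r)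
    (hpqr : q⁻¹ + r⁻¹ = 1 + p⁻¹) (hf : AEMeasurable f μ) (hg : AEMeasurable g μ) :
    eLpNorm (f ⋆ₗ[μ] g) p μ ≤ eLpNorm f q μ * eLpNorm g r μ := by
  have hq0 : q ≠ 0 := (zero_lt_one.trans_le hq).ne'
  have hr0 : r ≠ 0 := (zero_lt_one.trans_le hr).ne'
  have hp0 : p ≠ 0 := by
    rintro rfl
    rw [ENNReal.inv_zero, add_top] at hpqr
    exact ENNReal.add_ne_top.2 ⟨ENNReal.inv_ne_top.2 hq0, ENNReal.inv_ne_top.2 hr0⟩ hpqr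
  have hq' : q ≠ ∞ := ENNReal.ne_top_of_inv_add_inv_eq_one_add_inv hp hr hpqr
  have hr' : r ≠ ∞ := ENNReal.ne_top_of_inv_add_inv_eq_one_add_inv hp hq ((add_comm _ _).trans hpqr)
  have hPQR : q.toReal⁻¹ + r.toReal⁻¹ = 1 + p.toReal⁻¹ := by
    have := congrArg ENNReal.toReal hpqr
    rwa [ENNReal.toReal_add (ENNReal.inv_ne_top.2 hq0) (ENNReal.inv_ne_top.2 hr0),
      ENNReal.toReal_add ENNReal.one_ne_top (ENNReal.inv_ne_top.2 hp0), ENNReal.toReal_inv,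
      ENNReal.toReal_inv, ENNReal.toReal_inv, ENNReal.toReal_one] at this
  have hP : 0 < p.toReal := ENNReal.toReal_pos hp0 hp
  rw [eLpNorm_eq_lintegral_rpow_enorm_toReal hp0 hp, eLpNorm_eq_lintegral_rpow_enorm_toReal hq0 hq',
    eLpNorm_eq_lintegral_rpow_enorm_toReal hr0 hr']
  simp only [enorm_eq_self]
  calc (∫⁻ x, (f ⋆ₗ[μ] g) x ^ p.toReal ∂μ) ^ (1 / p.toReal)
      ≤ ((∫⁻ x, f x ^ q.toReal ∂μ) ^ (p.toReal / q.toReal) *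
          (∫⁻ x, g x ^ r.toReal ∂μ) ^ (p.toReal / r.toReal)) ^ (1 / p.toReal) := by
        gcongr
        exact lintegral_lconvolution_rpow_le hP (by simpa using ENNReal.toReal_mono hq' hq)
          (by simpa using ENNReal.toReal_mono hr' hr) hPQR hf hg
    _ = _ := by
        rw [ENNReal.mul_rpow_of_nonneg _ _ (by positivity), ← ENNReal.rpow_mul, ← ENNReal.rpow_mul]
        congr 2 <;> field_simp

theorem eLpNorm_integral_sub_mul_le {𝕜 : Type*} [NormedRing 𝕜] [NormMulClass 𝕜]
    [NormedSpace ℝ 𝕜] {ω F : G → 𝕜} {p q r : ℝ≥0∞} (hp : p ≠ ∞) (hq : 1 ≤ q) (hr : 1 ≤ r)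
    (hpqr : q⁻¹ + r⁻¹ = 1 + p⁻¹) (hω : AEStronglyMeasurable ω μ)
    (hF : AEStronglyMeasurable F μ) :
    eLpNorm (fun x => ∫ y, ω (x - y) * F y ∂μ) p μ ≤ eLpNorm ω q μ * eLpNorm F r μ := by
  rw [← eLpNorm_enorm ω, ← eLpNorm_enorm F, mul_comm]
  exact (eLpNorm_mono_enorm fun x => (enorm_integral_sub_mul_le_lconvolution ω F x).trans_eq
    (enorm_eq_self _).symm).trans
      (eLpNorm_lconvolution_le hp hr hq ((add_comm _ _).trans hpqr) hF.enorm hω.enorm)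

end Convolution

end MeasureTheory

/-- For `2 ≤ p < ∞` with conjugate `q`, `ω ∈ L^q(ℝᵈ)` and `g ∈ L^∞(ℝᵈ)`,
the function `Γ(x) = ∫ ω(x-y) g(y) h(y) v(y) dy` belongs to `Lᵖ(ℝᵈ)` for all
`h, v ∈ Lᵖ(ℝᵈ)`, with `‖Γ‖_p ≤ ‖g‖_∞ ‖ω‖_q ‖h‖_p ‖v‖_p`. -/
theorem stmt10 {d : ℕ} (p q : ℝ≥0∞) (hp2 : 2 ≤ p) (hptop : p ≠ ⊤)
    (hpq : 1 / p + 1 / q = 1)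
    (ω g h v : (Fin d → ℝ) → ℝ)
    (hω : MemLp ω q (volume : Measure (Fin d → ℝ)))
    (hg : MemLp g ⊤ (volume : Measure (Fin d → ℝ)))
    (hh : MemLp h p (volume : Measure (Fin d → ℝ)))
    (hv : MemLp v p (volume : Measure (Fin d → ℝ)))
    (Γ : (Fin d → ℝ) → ℝ)
    (hΓ : ∀ x, Γ x = ∫ y, ω (x - y) * g y * h y * v y) :
    MemLp Γ p (volume : Measure (Fin d → ℝ)) ∧
    eLpNorm Γ p volume ≤
      eLpNorm g ⊤ volume * eLpNorm ω q volume * eLpNorm h p volume * eLpNorm v p volume := by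
  have hpq' : p⁻¹ + q⁻¹ = 1 := by simpa only [one_div] using hpq
  have : p.HolderTriple p (p / 2) := ⟨(ENNReal.inv_div_two p).symm⟩
  have hp_half : 1 ≤ p / 2 := by
    rwa [ENNReal.le_div_iff_mul_le (.inl two_ne_zero) (.inl ENNReal.ofNat_ne_top), one_mul]
  have : p.HolderConjugate q := ENNReal.holderConjugate_iff.2 hpq'
  have hq : 1 ≤ q := ENNReal.HolderConjugate.one_le q p
  have hexp : q⁻¹ + (p / 2)⁻¹ = 1 + p⁻¹ := by
    rw [ENNReal.inv_div_two, ← add_assoc, add_comm q⁻¹, hpq']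
  simp only [mul_assoc] at hΓ
  obtain rfl : Γ = fun x => ∫ y, ω (x - y) * (g y * (h y * v y)) := funext hΓ
  have hbound : eLpNorm (fun x => ∫ y, ω (x - y) * (g y * (h y * v y))) p volume ≤
      eLpNorm g ⊤ volume * eLpNorm ω q volume * eLpNorm h p volume * eLpNorm v p volume :=
    calc _ ≤ eLpNorm ω q volume * eLpNorm (fun y => g y * (h y * v y)) (p / 2) volume :=
          eLpNorm_integral_sub_mul_le hptop hq hp_half hexp hω.1 (hg.1.mul (hh.1.mul hv.1))
      _ ≤ eLpNorm ω q volume * (eLpNorm g ⊤ volume *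
            (eLpNorm h p volume * eLpNorm v p volume)) := by
          grw [eLpNorm_mul_mul_le_top_mul_mul_eLpNorm (p := p) (q := p) hg.1 hh.1 hv.1]
      _ = _ := by ring
  exact ⟨⟨hω.1.integral_sub_mul (hg.1.mul (hh.1.mul hv.1)), hbound.trans_lt (by finiteness)⟩,
    hbound⟩
end

section
/- Let X be a Banach space, N : X → X globally Lipschitz and continuously Fréchet differentiable, generating flows U_t (solving d/dt U_t(a) = N(U_t(a)), U_0(a) = a) and V_t = U_{−t}. Then for any T > 0, a₀ ∈ X, and I ∈ L¹((0,T); X), the solution a of ȧ(t) = N(a(t)) + I(t), a(0) = a₀, satisfies the backward representation a(t) = U_{t−T}( U_T(a₀) + ∫₀^t DU_{T−s}(a(s)) I(s) ds ) for all t ∈ [0,T], where DU_τ(·) denotes the Fréchet derivative of the flow map U_τ. -/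
/-!
Set `b(s) = U_{T-s}(a(s))`; then `a(t) = U_{t-T}(b(t))` by the group law of the flow, and the
claim is the fundamental theorem of calculus for `b`, once `b'(τ) = DU_{T-τ}(a(τ)) I(τ)`.
For the derivative, write `b(τ+h) - b(τ) = U_{-h}(P h) - U_{-h}(Q h)` with
`P h = U_{T-τ}(a(τ+h))` and `Q h = U_{T-τ}(U_h(a(τ)))`. By Grönwall, the flow of a
`K`-Lipschitz field moves differences by little:
`‖U_s p - U_s q - (p - q)‖ ≤ K e^{K|s|} |s| ‖p - q‖`, so `b(τ+h) - b(τ) = P h - Q h + o(h)`, and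
`P - Q` has derivative `DU_{T-τ}(a(τ))(N(a(τ)) + I(τ)) - DU_{T-τ}(a(τ))(N(a(τ)))` at `0`.
-/

open Real Filter MeasureTheory intervalIntegral Topology Asymptotics Set

section Trajectories

variable {X : Type*} [NormedAddCommGroup X] [NormedSpace ℝ X] {v : X → X} {K : NNReal}
  {f g : ℝ → X}

theorem norm_sub_le_mul_exp_of_nonneg (hv : LipschitzWith K v)
    (hf : ∀ t, HasDerivAt f (v (f t)) t) (hg : ∀ t, HasDerivAt g (v (g t)) t)
    {t : ℝ} (ht : 0 ≤ t) : ‖f t - g t‖ ≤ ‖f 0 - g 0‖ * exp (K * t) := by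
  have h := dist_le_of_trajectories_ODE (v := fun _ => v) (a := 0) (b := t) (fun _ => hv)
    (fun s _ => (hf s).continuousAt.continuousWithinAt) (fun s _ => (hf s).hasDerivWithinAt)
    (fun s _ => (hg s).continuousAt.continuousWithinAt) (fun s _ => (hg s).hasDerivWithinAt)
    (dist_eq_norm _ _).le t ⟨ht, le_rfl⟩
  simpa [dist_eq_norm] using h

theorem norm_sub_le_mul_exp_abs (hv : LipschitzWith K v)
    (hf : ∀ t, HasDerivAt f (v (f t)) t) (hg : ∀ t, HasDerivAt g (v (g t)) t) (t : ℝ) :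
    ‖f t - g t‖ ≤ ‖f 0 - g 0‖ * exp (K * |t|) := by
  rcases le_or_gt 0 t with ht | ht
  · simpa [abs_of_nonneg ht] using norm_sub_le_mul_exp_of_nonneg hv hf hg ht
  · have hrev : ∀ {f : ℝ → X}, (∀ t, HasDerivAt f (v (f t)) t) →
        ∀ t, HasDerivAt (fun s => f (-s)) (-v (f (-t))) t := fun hf t => by
      simpa using (hf (0 - t)).comp_const_sub 0 t
    have hneg : LipschitzWith K (fun x => -v x) := by simpa [Pi.neg_def] using hv.neg
    simpa [abs_of_neg ht] using
      norm_sub_le_mul_exp_of_nonneg hneg (hrev hf) (hrev hg) (neg_nonneg.2 ht.le)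

theorem norm_sub_sub_sub_le (hv : LipschitzWith K v)
    (hf : ∀ t, HasDerivAt f (v (f t)) t) (hg : ∀ t, HasDerivAt g (v (g t)) t) (t : ℝ) :
    ‖f t - g t - (f 0 - g 0)‖ ≤ K * ‖f 0 - g 0‖ * exp (K * |t|) * |t| := by
  have hbound : ∀ s ∈ uIcc 0 t, ‖v (f s) - v (g s)‖ ≤ K * ‖f 0 - g 0‖ * exp (K * |t|) := by
    intro s hs
    have hst : |s| ≤ |t| := by simpa using abs_sub_left_of_mem_uIcc hs
    calc ‖v (f s) - v (g s)‖ ≤ K * ‖f s - g s‖ := by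
          simpa [dist_eq_norm] using hv.dist_le_mul (f s) (g s)
      _ ≤ K * (‖f 0 - g 0‖ * exp (K * |s|)) := by
          gcongr; exact norm_sub_le_mul_exp_abs hv hf hg s
      _ ≤ K * ‖f 0 - g 0‖ * exp (K * |t|) := by
          rw [← mul_assoc]; gcongr
  simpa using (convex_uIcc 0 t).norm_image_sub_le_of_norm_hasDerivWithin_le
    (fun s _ => ((hf s).sub (hg s)).hasDerivWithinAt) hbound left_mem_uIcc right_mem_uIcc

end Trajectories

section Flow

variable {X : Type*} [NormedAddCommGroup X] [NormedSpace ℝ X] {N : X → X} {K : NNReal}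
  {U : ℝ → X → X}

theorem flow_add (hN : LipschitzWith K N) (hU0 : ∀ x, U 0 x = x)
    (hU : ∀ x t, HasDerivAt (fun s => U s x) (N (U t x)) t) (s t : ℝ) (x : X) :
    U s (U t x) = U (s + t) x := by
  have hshift : ∀ r, HasDerivAt (fun r => U (r + t) x) (N (U (r + t) x)) r := fun r =>
    (hU x (r + t)).comp_add_const r t
  have h := ODE_solution_unique_univ (v := fun _ => N) (s := fun _ => univ) (t₀ := 0)
    (fun _ => hN.lipschitzOnWith) (fun r => ⟨hU (U t x) r, trivial⟩)
    (fun r => ⟨hshift r, trivial⟩) (by simp [hU0])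
  exact congrFun h s

theorem isLittleO_flow_neg_sub_sub (hN : LipschitzWith K N) (hU0 : ∀ x, U 0 x = x)
    (hU : ∀ x t, HasDerivAt (fun s => U s x) (N (U t x)) t) {p q : ℝ → X}
    (hpq : Tendsto (fun h => p h - q h) (𝓝 0) (𝓝 0)) :
    (fun h => U (-h) (p h) - U (-h) (q h) - (p h - q h)) =o[𝓝 0] fun h => h := by
  set c : ℝ → ℝ := fun h => K * ‖p h - q h‖ * exp (K * |h|)
  have hc : Tendsto c (𝓝 0) (𝓝 0) := by
    have hexp : Continuous fun h : ℝ => exp (K * |h|) := by fun_prop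
    simpa using ((hpq.norm.const_mul (K : ℝ)).mul (hexp.tendsto 0))
  have hbound : ∀ h, ‖U (-h) (p h) - U (-h) (q h) - (p h - q h)‖ ≤ ‖c h * h‖ := fun h => by
    have := norm_sub_sub_sub_le hN (hU (p h)) (hU (q h)) (-h)
    simp only [hU0, abs_neg] at this
    rw [norm_mul, Real.norm_eq_abs, Real.norm_eq_abs, abs_of_nonneg (by positivity)]
    exact this
  refine (IsBigO.of_bound' (Eventually.of_forall hbound)).trans_isLittleO ?_
  simpa using ((isLittleO_one_iff ℝ).2 hc).mul_isBigO (isBigO_refl (fun h : ℝ => h) (𝓝 0))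

theorem hasDerivAt_flow_sub_comp (hN : LipschitzWith K N) (hU0 : ∀ x, U 0 x = x)
    (hU : ∀ x t, HasDerivAt (fun s => U s x) (N (U t x)) t) {a : ℝ → X} {c τ : ℝ} {i : X}
    {D : X →L[ℝ] X} (hD : HasFDerivAt (U (c - τ)) D (a τ))
    (ha : HasDerivAt a (N (a τ) + i) τ) :
    HasDerivAt (fun σ => U (c - σ) (a σ)) (D i) τ := by
  set P : ℝ → X := fun h => U (c - τ) (a (τ + h))
  set Q : ℝ → X := fun h => U (c - τ) (U h (a τ))
  have hP : HasDerivAt P (D (N (a τ) + i)) 0 :=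
    (by simpa using hD : HasFDerivAt (U (c - τ)) D (a (τ + 0))).comp_hasDerivAt 0
      ((by simpa using ha : HasDerivAt a _ (τ + 0)).comp_const_add τ 0)
  have hQ : HasDerivAt Q (D (N (a τ))) 0 :=
    (by simpa [hU0] using hD : HasFDerivAt (U (c - τ)) D (U 0 (a τ))).comp_hasDerivAt 0
      (by simpa [hU0] using hU (a τ) 0)
  have hPQ : HasDerivAt (fun h => P h - Q h) (D i) 0 := by
    have h := hP.sub hQ
    rwa [map_add, add_sub_cancel_left] at h
  have hPQ0 : P 0 - Q 0 = 0 := by simp [P, Q, hU0]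
  have hsplit : ∀ h, U (c - (τ + h)) (a (τ + h)) - U (c - τ) (a τ)
      = U (-h) (P h) - U (-h) (Q h) := fun h => by
    simp only [P, Q, flow_add hN hU0 hU]
    congr 2 <;> ring_nf
  have hE := isLittleO_flow_neg_sub_sub hN hU0 hU
    (hPQ0 ▸ hPQ.continuousAt.tendsto : Tendsto (fun h => P h - Q h) (𝓝 0) (𝓝 0))
  rw [hasDerivAt_iff_isLittleO_nhds_zero] at hPQ ⊢
  refine (hPQ.add hE).congr_left fun h => ?_
  simp only [zero_add, hPQ0, sub_zero, hsplit]
  abel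

end Flow

theorem stmt13_general {X : Type*} [NormedAddCommGroup X] [NormedSpace ℝ X] [CompleteSpace X]
    (N : X → X) (K : NNReal) (hNlip : LipschitzWith K N)
    (U : ℝ → X → X)
    (hU0 : ∀ x, U 0 x = x)
    (hUflow : ∀ (x : X) (t : ℝ), HasDerivAt (fun s => U s x) (N (U t x)) t)
    (DU : ℝ → X → (X →L[ℝ] X))
    (hDU : ∀ (t : ℝ) (x : X), HasFDerivAt (U t) (DU t x) x)
    (T : ℝ) (a₀ : X) (I : ℝ → X) (a : ℝ → X)
    (ha0 : a 0 = a₀)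
    (hode : ∀ t ∈ Set.Icc (0 : ℝ) T, HasDerivAt a (N (a t) + I t) t)
    (hint : IntervalIntegrable (fun s => (DU (T - s) (a s)) (I s)) volume 0 T) :
    ∀ t ∈ Set.Icc (0 : ℝ) T,
      a t = U (t - T) (U T a₀ + ∫ s in (0 : ℝ)..t, (DU (T - s) (a s)) (I s)) := by
  rintro t ⟨ht0, htT⟩
  have hsub : uIcc 0 t ⊆ Icc 0 T := by
    rw [uIcc_of_le ht0]; exact Icc_subset_Icc_right htT
  have hftc : ∫ s in (0 : ℝ)..t, (DU (T - s) (a s)) (I s) = U (T - t) (a t) - U (T - 0) (a 0) :=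
    integral_eq_sub_of_hasDerivAt
      (fun s hs => hasDerivAt_flow_sub_comp hNlip hU0 hUflow (hDU _ _) (hode s (hsub hs)))
      (hint.mono_set (by rwa [uIcc_of_le (ht0.trans htT)]))
  rw [hftc, sub_zero, ha0, add_sub_cancel, flow_add hNlip hU0 hUflow, sub_add_sub_cancel',
    sub_self, hU0]

/-- Backward representation of the solution of `ȧ = N(a) + I(t)`:
`a(t) = U_{t-T}(U_T(a₀) + ∫₀ᵗ DU_{T-s}(a(s)) I(s) ds)` for `t ∈ [0,T]`, where `U` is
the flow of the globally Lipschitz `C¹` drift `N` and `DU_τ(·)` is its Fréchet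
derivative in the state. -/
theorem stmt13 {X : Type*} [NormedAddCommGroup X] [NormedSpace ℝ X] [CompleteSpace X]
    (N : X → X) (K : NNReal) (hNlip : LipschitzWith K N) (hNC1 : ContDiff ℝ 1 N)
    (U : ℝ → X → X)
    (hU0 : ∀ x, U 0 x = x)
    (hUflow : ∀ (x : X) (t : ℝ), HasDerivAt (fun s => U s x) (N (U t x)) t)
    (DU : ℝ → X → (X →L[ℝ] X))
    (hDU : ∀ (t : ℝ) (x : X), HasFDerivAt (U t) (DU t x) x)
    (T : ℝ) (hT : 0 < T) (a₀ : X) (I : ℝ → X) (a : ℝ → X)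
    (ha0 : a 0 = a₀)
    (hode : ∀ t ∈ Set.Icc (0 : ℝ) T, HasDerivAt a (N (a t) + I t) t)
    (hI : IntervalIntegrable I volume 0 T)
    (hint : IntervalIntegrable (fun s => (DU (T - s) (a s)) (I s)) volume 0 T) :
    ∀ t ∈ Set.Icc (0 : ℝ) T,
      a t = U (t - T) (U T a₀ + ∫ s in (0 : ℝ)..t, (DU (T - s) (a s)) (I s)) :=
  stmt13_general N K hNlip U hU0 hUflow DU hDU T a₀ I a ha0 hode hint
end
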